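/- arXiv:2503.12670 — 9 statements merged into one kernel-verified Lean document; each statement's English description precedes it below -/
import Mathlib

section
/- Let N be a positive natural number, let H be an invertible N×N real matrix, let D̃ and C be N×N real matrices, and let ε be a real number. Define the artificial dissipation operator A_D := -ε • H⁻¹ * D̃ᵀ * C * D̃. If D̃ annihilates the all-ones vector, i.e. D̃ *ᵥ 1 = 0, then for every u ∈ ℝᴺ one has 1ᵀ ⬝ᵥ (H *ᵥ (A_D *ᵥ u)) = 0; that is, augmenting a conservative semi-discretization with A_D preserves discrete conservation. -/
open Matrix

/-- Conservation: augmenting a conservative semi-discretization with the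
artificial dissipation operator `A_D = -ε • H⁻¹ * D̃ᵀ * C * D̃` preserves
discrete conservation, provided `D̃` annihilates the all-ones vector. -/
theorem dissipation_conservative
    (N : ℕ) (hN : 0 < N)
    (H Dt C : Matrix (Fin N) (Fin N) ℝ) (hH : IsUnit H) (ε : ℝ)
    (hD : Dt *ᵥ (1 : Fin N → ℝ) = 0) :
    ∀ u : Fin N → ℝ,
      (1 : Fin N → ℝ) ⬝ᵥ (H *ᵥ (((-ε) • (H⁻¹ * Dtᵀ * C * Dt)) *ᵥ u)) = 0 := by
  intro u
  rw [smul_mulVec, mulVec_smul, dotProduct_smul]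
  have h1 : H * (H⁻¹ * Dtᵀ * C * Dt) = Dtᵀ * (C * Dt) := by
    rw [show H⁻¹ * Dtᵀ * C * Dt = H⁻¹ * (Dtᵀ * (C * Dt)) by
        simp [mul_assoc],
      ← mul_assoc, Matrix.mul_nonsing_inv _ (isUnit_iff_isUnit_det H |>.mp hH),
      one_mul]
  rw [mulVec_mulVec, h1, ← mulVec_mulVec, dotProduct_mulVec, vecMul_transpose,
    hD, zero_dotProduct, smul_zero]
end

section
/- Let N be a positive natural number, let H be a symmetric positive definite N×N real matrix, let D̃ be an N×N real matrix, let C be a symmetric positive semidefinite N×N real matrix, let ε ≥ 0, and let P be an N×N real matrix such that the baseline scheme is energy-stable: uᵀ ⬝ᵥ (H *ᵥ (P *ᵥ u)) ≤ 0 for all u ∈ ℝᴺ. Define A_D := -ε • H⁻¹ * D̃ᵀ * C * D̃. Then the augmented scheme is energy-stable: for all u ∈ ℝᴺ, uᵀ ⬝ᵥ (H *ᵥ (P *ᵥ u + A_D *ᵥ u)) ≤ 0; in particular uᵀ ⬝ᵥ (H *ᵥ (A_D *ᵥ u)) = -ε · (D̃ *ᵥ u)ᵀ ⬝ᵥ (C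 *ᵥ (D̃ *ᵥ u)) ≤ 0. -/
/-! In the `H`-weighted energy the factor `H⁻¹` of `A_D` cancels, so the dissipation contributes
`-ε (D̃u)ᵀ C (D̃u) ≤ 0` to the energy rate, which adds to the nonpositive rate of the baseline
scheme. -/

open Matrix

section

variable {m n R : Type*} [Fintype m] [Fintype n]

theorem Matrix.isUnit_det_of_dotProduct_mulVec_pos [DecidableEq n] [Field R] [LinearOrder R]
    [IsStrictOrderedRing R] {H : Matrix n n R} (hH : ∀ v : n → R, v ≠ 0 → 0 < v ⬝ᵥ (H *ᵥ v)) :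
    IsUnit H.det := by
  refine isUnit_iff_ne_zero.mpr fun hdet => ?_
  obtain ⟨v, hv, hHv⟩ := exists_mulVec_eq_zero_iff.mpr hdet
  simpa [hHv] using hH v hv

theorem Matrix.dotProduct_transpose_mul_mul_mulVec [CommSemiring R] (D : Matrix m n R)
    (C : Matrix m m R) (u : n → R) :
    u ⬝ᵥ ((Dᵀ * C * D) *ᵥ u) = (D *ᵥ u) ⬝ᵥ (C *ᵥ (D *ᵥ u)) := by
  rw [← mulVec_mulVec, ← mulVec_mulVec, dotProduct_mulVec, vecMul_transpose]

theorem Matrix.dotProduct_mulVec_smul_inv_mul_mulVec [DecidableEq n] [CommRing R]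
    {H : Matrix n n R} (hH : IsUnit H.det) (c : R) (M : Matrix n n R) (u : n → R) :
    u ⬝ᵥ (H *ᵥ ((c • (H⁻¹ * M)) *ᵥ u)) = c * (u ⬝ᵥ (M *ᵥ u)) := by
  rw [mulVec_mulVec, mul_smul_comm, mul_nonsing_inv_cancel_left H M hH, smul_mulVec,
    dotProduct_smul, smul_eq_mul]

end

theorem dissipation_energy_stable_general
    (N : ℕ)
    (H Dt C P : Matrix (Fin N) (Fin N) ℝ) (ε : ℝ) (hε : 0 ≤ ε)
    (hHpos : ∀ v : Fin N → ℝ, v ≠ 0 → 0 < v ⬝ᵥ (H *ᵥ v))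
    (hCpsd : ∀ v : Fin N → ℝ, 0 ≤ v ⬝ᵥ (C *ᵥ v))
    (hP : ∀ u : Fin N → ℝ, u ⬝ᵥ (H *ᵥ (P *ᵥ u)) ≤ 0) :
    ∀ u : Fin N → ℝ,
      u ⬝ᵥ (H *ᵥ (P *ᵥ u + ((-ε) • (H⁻¹ * Dtᵀ * C * Dt)) *ᵥ u)) ≤ 0 ∧
      u ⬝ᵥ (H *ᵥ (((-ε) • (H⁻¹ * Dtᵀ * C * Dt)) *ᵥ u))
        = -ε * ((Dt *ᵥ u) ⬝ᵥ (C *ᵥ (Dt *ᵥ u))) ∧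
      -ε * ((Dt *ᵥ u) ⬝ᵥ (C *ᵥ (Dt *ᵥ u))) ≤ 0 := by
  intro u
  have hdet : IsUnit H.det := isUnit_det_of_dotProduct_mulVec_pos hHpos
  have hrate : u ⬝ᵥ (H *ᵥ (((-ε) • (H⁻¹ * Dtᵀ * C * Dt)) *ᵥ u))
      = -ε * ((Dt *ᵥ u) ⬝ᵥ (C *ᵥ (Dt *ᵥ u))) := by
    rw [show H⁻¹ * Dtᵀ * C * Dt = H⁻¹ * (Dtᵀ * C * Dt) by simp only [Matrix.mul_assoc],
      dotProduct_mulVec_smul_inv_mul_mulVec hdet, dotProduct_transpose_mul_mul_mulVec]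
  have hdiss : -ε * ((Dt *ᵥ u) ⬝ᵥ (C *ᵥ (Dt *ᵥ u))) ≤ 0 :=
    mul_nonpos_of_nonpos_of_nonneg (neg_nonpos.mpr hε) (hCpsd _)
  refine ⟨?_, hrate, hdiss⟩
  rw [mulVec_add, dotProduct_add, hrate]
  exact add_nonpos (hP u) hdiss

/-- Energy stability: augmenting an energy-stable semi-discretization with the
artificial dissipation operator `A_D = -ε • H⁻¹ * D̃ᵀ * C * D̃` acting on the
conservative variables results in an energy-stable semi-discrete scheme for a
positive semidefinite `C`. -/
theorem dissipation_energy_stable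
    (N : ℕ) (hN : 0 < N)
    (H Dt C P : Matrix (Fin N) (Fin N) ℝ) (ε : ℝ) (hε : 0 ≤ ε)
    (hHsymm : Hᵀ = H)
    (hHpos : ∀ v : Fin N → ℝ, v ≠ 0 → 0 < v ⬝ᵥ (H *ᵥ v))
    (hCsymm : Cᵀ = C)
    (hCpsd : ∀ v : Fin N → ℝ, 0 ≤ v ⬝ᵥ (C *ᵥ v))
    (hP : ∀ u : Fin N → ℝ, u ⬝ᵥ (H *ᵥ (P *ᵥ u)) ≤ 0) :
    ∀ u : Fin N → ℝ,
      u ⬝ᵥ (H *ᵥ (P *ᵥ u + ((-ε) • (H⁻¹ * Dtᵀ * C * Dt)) *ᵥ u)) ≤ 0 ∧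
      u ⬝ᵥ (H *ᵥ (((-ε) • (H⁻¹ * Dtᵀ * C * Dt)) *ᵥ u))
        = -ε * ((Dt *ᵥ u) ⬝ᵥ (C *ᵥ (Dt *ᵥ u))) ∧
      -ε * ((Dt *ᵥ u) ⬝ᵥ (C *ᵥ (Dt *ᵥ u))) ≤ 0 :=
  dissipation_energy_stable_general N H Dt C P ε hε hHpos hCpsd hP
end

section
/- Let N be a positive natural number, let H be a symmetric positive definite N×N real matrix, let D̃ be an N×N real matrix, let C be a symmetric positive semidefinite N×N real matrix, and let ε ≥ 0. Define A_D := -ε • H⁻¹ * D̃ᵀ * C * D̃. Suppose u, w ∈ ℝᴺ and the baseline semi-discretization P satisfies the entropy-stability bound wᵀ ⬝ᵥ (H *ᵥ (P *ᵥ u)) ≤ 0 (the entropy variables w contracted against the baseline right-hand side are nonpositive). Then the scheme augmented with dissipation acting on the entropy variables remains entropy-stable: wᵀ ⬝ᵥ (H *ᵥ (P *ᵥ u + A_D *ᵥ w)) ≤ 0, since wᵀ ⬝ᵥ (H *ᵥ (A_D *ᵥ w)) = -ε · (D̃ *ᵥ w)ᵀ ⬝ᵥ (C *ᵥ (D̃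 *ᵥ w)) ≤ 0. -/
/-!
Since `H` is positive definite it is invertible, so `H * H⁻¹ = 1` and the dissipation term
contributes `wᵀ H A_D w = -ε wᵀ D̃ᵀ C D̃ w = -ε (D̃ w)ᵀ C (D̃ w)`, which is nonpositive because `C`
is positive semidefinite and `ε ≥ 0`. Adding it to the nonpositive baseline contribution keeps the
total nonpositive.
-/

open Matrix

namespace Matrix

variable {n m R : Type*} [Fintype n] [Fintype m]

theorem isUnit_det_of_dotProduct_mulVec_pos_s2 [DecidableEq n] [Field R] [LinearOrder R]
    [IsStrictOrderedRing R] {H : Matrix n n R} (hH : ∀ v : n → R, v ≠ 0 → 0 < v ⬝ᵥ (H *ᵥ v)) :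
    IsUnit H.det := by
  refine isUnit_iff_ne_zero.mpr fun hdet => ?_
  obtain ⟨v, hv, hHv⟩ := exists_mulVec_eq_zero_iff.mpr hdet
  simpa [hHv] using hH v hv

theorem dotProduct_mulVec_transpose_mul_mul [CommSemiring R] (D : Matrix m n R)
    (C : Matrix m m R) (w : n → R) :
    w ⬝ᵥ ((Dᵀ * C * D) *ᵥ w) = (D *ᵥ w) ⬝ᵥ (C *ᵥ (D *ᵥ w)) := by
  rw [Matrix.mul_assoc, ← mulVec_mulVec, ← mulVec_mulVec, dotProduct_mulVec, vecMul_transpose]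

theorem dotProduct_mulVec_mul_nonsing_inv_transpose_mul_mul [DecidableEq n] [CommRing R]
    {H : Matrix n n R} (hH : IsUnit H.det) (D : Matrix m n R) (C : Matrix m m R) (w : n → R) :
    w ⬝ᵥ (H *ᵥ ((H⁻¹ * Dᵀ * C * D) *ᵥ w)) = (D *ᵥ w) ⬝ᵥ (C *ᵥ (D *ᵥ w)) := by
  rw [mulVec_mulVec, Matrix.mul_assoc, Matrix.mul_assoc, ← Matrix.mul_assoc Dᵀ,
    mul_nonsing_inv_cancel_left _ _ hH, dotProduct_mulVec_transpose_mul_mul]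

end Matrix

theorem dissipation_entropy_stable_general
    (N : ℕ)
    (H Dt C P : Matrix (Fin N) (Fin N) ℝ) (ε : ℝ) (hε : 0 ≤ ε)
    (hHpos : ∀ v : Fin N → ℝ, v ≠ 0 → 0 < v ⬝ᵥ (H *ᵥ v))
    (hCpsd : ∀ v : Fin N → ℝ, 0 ≤ v ⬝ᵥ (C *ᵥ v))
    (u w : Fin N → ℝ)
    (hP : w ⬝ᵥ (H *ᵥ (P *ᵥ u)) ≤ 0) :
    w ⬝ᵥ (H *ᵥ (P *ᵥ u + ((-ε) • (H⁻¹ * Dtᵀ * C * Dt)) *ᵥ w)) ≤ 0 ∧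
    w ⬝ᵥ (H *ᵥ (((-ε) • (H⁻¹ * Dtᵀ * C * Dt)) *ᵥ w))
      = -ε * ((Dt *ᵥ w) ⬝ᵥ (C *ᵥ (Dt *ᵥ w))) ∧
    -ε * ((Dt *ᵥ w) ⬝ᵥ (C *ᵥ (Dt *ᵥ w))) ≤ 0 := by
  have dissipation_eq : w ⬝ᵥ (H *ᵥ (((-ε) • (H⁻¹ * Dtᵀ * C * Dt)) *ᵥ w))
      = -ε * ((Dt *ᵥ w) ⬝ᵥ (C *ᵥ (Dt *ᵥ w))) := by
    rw [smul_mulVec, mulVec_smul, dotProduct_smul, smul_eq_mul,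
      dotProduct_mulVec_mul_nonsing_inv_transpose_mul_mul
        (isUnit_det_of_dotProduct_mulVec_pos_s2 hHpos)]
  have dissipation_nonpos : -ε * ((Dt *ᵥ w) ⬝ᵥ (C *ᵥ (Dt *ᵥ w))) ≤ 0 :=
    mul_nonpos_of_nonpos_of_nonneg (neg_nonpos.mpr hε) (hCpsd _)
  refine ⟨?_, dissipation_eq, dissipation_nonpos⟩
  rw [mulVec_add, dotProduct_add, dissipation_eq]
  exact add_nonpos hP dissipation_nonpos

/-- Entropy stability: augmenting an entropy-stable semi-discretization with the
artificial dissipation operator `A_D = -ε • H⁻¹ * D̃ᵀ * C * D̃` acting on the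
entropy variables `w` results in an entropy-stable semi-discrete scheme for a
positive semidefinite `C`. -/
theorem dissipation_entropy_stable
    (N : ℕ) (hN : 0 < N)
    (H Dt C P : Matrix (Fin N) (Fin N) ℝ) (ε : ℝ) (hε : 0 ≤ ε)
    (hHsymm : Hᵀ = H)
    (hHpos : ∀ v : Fin N → ℝ, v ≠ 0 → 0 < v ⬝ᵥ (H *ᵥ v))
    (hCsymm : Cᵀ = C)
    (hCpsd : ∀ v : Fin N → ℝ, 0 ≤ v ⬝ᵥ (C *ᵥ v))
    (u w : Fin N → ℝ)
    (hP : w ⬝ᵥ (H *ᵥ (P *ᵥ u)) ≤ 0) :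
    w ⬝ᵥ (H *ᵥ (P *ᵥ u + ((-ε) • (H⁻¹ * Dtᵀ * C * Dt)) *ᵥ w)) ≤ 0 ∧
    w ⬝ᵥ (H *ᵥ (((-ε) • (H⁻¹ * Dtᵀ * C * Dt)) *ᵥ w))
      = -ε * ((Dt *ᵥ w) ⬝ᵥ (C *ᵥ (Dt *ᵥ w))) ∧
    -ε * ((Dt *ᵥ w) ⬝ᵥ (C *ᵥ (Dt *ᵥ w))) ≤ 0 :=
  dissipation_entropy_stable_general N H Dt C P ε hε hHpos hCpsd u w hP
end

section
/- Let p ≥ 1 and let x : Fin (p+1) → ℝ be injective (p+1 distinct nodes). For k ∈ ℕ let m_k ∈ ℝ^{p+1} denote the vector with entries (x j)^k. Suppose A and B are symmetric (p+1)×(p+1) real matrices satisfying A *ᵥ m_k = 0 and B *ᵥ m_k = 0 for every k ≤ p−1 (they annihilate all polynomials of degree at most p−1 sampled at the nodes). Then A and B are linearly dependent: there exist real numbers c and d, not both zero, such that c • A = d • B. In particular, a symmetric dissipation operator on p+1 distinct nodes annihilating polynomials up to degree p−1 is uniquely defined up to a multiplicative constant. -/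
open Matrix

/-- Uniqueness of spectral-element volume dissipation up to a multiplicative
constant: two symmetric `(p+1)×(p+1)` matrices annihilating all monomial sample
vectors of degree at most `p-1` at `p+1` distinct nodes are linearly dependent. -/
theorem se_dissipation_unique_up_to_constant
    (p : ℕ) (hp : 1 ≤ p) (x : Fin (p + 1) → ℝ) (hx : Function.Injective x)
    (A B : Matrix (Fin (p + 1)) (Fin (p + 1)) ℝ)
    (hAsymm : Aᵀ = A) (hBsymm : Bᵀ = B)
    (hA : ∀ k : ℕ, k ≤ p - 1 → A *ᵥ (fun j => (x j) ^ k) = 0)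
    (hB : ∀ k : ℕ, k ≤ p - 1 → B *ᵥ (fun j => (x j) ^ k) = 0) :
    ∃ c d : ℝ, (c ≠ 0 ∨ d ≠ 0) ∧ c • A = d • B := by
  set W : Matrix (Fin (p + 1)) (Fin (p + 1)) ℝ := Matrix.vandermonde x with hWdef
  have hdet : W.det ≠ 0 := by
    rw [hWdef, Matrix.det_vandermonde]
    apply Finset.prod_ne_zero_iff.mpr
    intro i _
    apply Finset.prod_ne_zero_iff.mpr
    intro j hj
    rw [Finset.mem_Ioi] at hj
    exact sub_ne_zero.mpr (fun h => absurd (hx h).symm (ne_of_lt hj))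
  have hunit : IsUnit W.det := isUnit_iff_ne_zero.mpr hdet
  set r : Fin (p + 1) → ℝ := fun j => W⁻¹ (Fin.last p) j with hrdef
  -- r is nonzero somewhere
  obtain ⟨j0, hj0⟩ : ∃ j0, r j0 ≠ 0 := by
    by_contra h
    push_neg at h
    have h1 : (W⁻¹ * W) (Fin.last p) (Fin.last p) = 1 := by
      rw [Matrix.nonsing_inv_mul W hunit]; simp
    rw [Matrix.mul_apply] at h1
    have : ∀ k ∈ Finset.univ, W⁻¹ (Fin.last p) k * W k (Fin.last p) = 0 := by
      intro k _; exact mul_eq_zero_of_left (h k) _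
    rw [Finset.sum_eq_zero this] at h1
    exact zero_ne_one h1
  -- key lemma: a symmetric matrix annihilating the monomials is α • r⊗r
  have key : ∀ M : Matrix (Fin (p + 1)) (Fin (p + 1)) ℝ, Mᵀ = M →
      (∀ k : ℕ, k ≤ p - 1 → M *ᵥ (fun j => (x j) ^ k) = 0) →
      ∃ α : ℝ, ∀ i j, M i j = α * (r i * r j) := by
    intro M hsymm hM
    have hMW : ∀ i j, j ≠ Fin.last p → (M * W) i j = 0 := by
      intro i j hj
      have hjp : (j : ℕ) ≤ p - 1 := by
        have : (j : ℕ) < p := lt_of_le_of_ne (Nat.lt_succ_iff.mp j.isLt)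
          (fun h => hj (Fin.ext h))
        omega
      have := congrFun (hM j hjp) i
      simpa [Matrix.mul_apply, Matrix.mulVec, dotProduct, hWdef,
        Matrix.vandermonde] using this
    set u : Fin (p + 1) → ℝ := fun i => (M * W) i (Fin.last p) with hudef
    have hMur : ∀ i j, M i j = u i * r j := by
      intro i j
      have hM2 : M = M * W * W⁻¹ := by
        rw [Matrix.mul_assoc, Matrix.mul_nonsing_inv W hunit, Matrix.mul_one]
      conv_lhs => rw [hM2]
      rw [Matrix.mul_apply]
      rw [Finset.sum_eq_single (Fin.last p)
        (fun k _ hk => mul_eq_zero_of_left (hMW i k hk) _)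
        (fun h => absurd (Finset.mem_univ _) h)]
    have hur : ∀ i, u i = (u j0 / r j0) * r i := by
      intro i
      have h3 : u i * r j0 = u j0 * r i := by
        rw [← hMur i j0, ← hMur j0 i]
        exact congrFun (congrFun hsymm j0) i
      field_simp
      linear_combination h3
    refine ⟨u j0 / r j0, fun i j => ?_⟩
    rw [hMur i j, hur i]; ring
  obtain ⟨α, hα⟩ := key A hAsymm hA
  obtain ⟨β, hβ⟩ := key B hBsymm hB
  by_cases h : α = 0 ∧ β = 0
  · refine ⟨1, 1, Or.inl one_ne_zero, ?_⟩
    ext i j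
    simp [hα i j, hβ i j, h.1, h.2]
  · push_neg at h
    refine ⟨β, α, ?_, ?_⟩
    · by_cases hα0 : α = 0
      · exact Or.inl (h hα0)
      · exact Or.inr hα0
    · ext i j
      simp only [Matrix.smul_apply, hα i j, hβ i j, smul_eq_mul]
      ring
end

section
/- Let p ≥ 1 and let x : Fin (p+1) → ℝ be injective (p+1 distinct nodes). For k ∈ ℕ let m_k ∈ ℝ^{p+1} denote the vector with entries (x j)^k. Suppose A is a symmetric (p+1)×(p+1) real matrix satisfying A *ᵥ m_k = 0 for every k ≤ p−1. Then A has rank at most 1 and admits a rank-one representation: there exist a scalar λ ∈ ℝ and a vector v ∈ ℝ^{p+1} such that A = λ • (vvᵀ) (the outer product of v with itself) and v is Euclidean-orthogonal to every monomial sample vector of degree at most p−1, i.e. v ⬝ᵥ m_k = 0 for all k ≤ p−1. -/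
open Matrix

/-!
The sample vectors `m₀, …, m_{p-1}` are the first `p` columns of the invertible Vandermonde
matrix of the nodes, so they are independent and the vectors orthogonal to all of them form a
line `ℝ v`. The hypothesis says exactly that every row of `A` is orthogonal to each `m_k`, so
every row is a multiple of `v`; symmetry then forces `A = λ • v vᵀ`.
-/

namespace Matrix

variable {K m n : Type*} [Field K]

theorem linearIndependent_rows_vandermonde_transpose {p : ℕ} {x : Fin p → K}
    (hx : Function.Injective x) : LinearIndependent K (vandermonde x)ᵀ.row :=
  linearIndependent_rows_iff_isUnit.mpr <| (isUnit_transpose _).mpr <|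
    (isUnit_iff_isUnit_det _).mpr (det_vandermonde_ne_zero_iff.mpr hx).isUnit

theorem finrank_ker_mulVecLin_add_card [Fintype m] [Fintype n] {M : Matrix m n K}
    (hM : LinearIndependent K M.row) :
    Module.finrank K (LinearMap.ker M.mulVecLin) + Fintype.card m = Fintype.card n := by
  rw [← hM.rank_matrix, add_comm, rank, LinearMap.finrank_range_add_finrank_ker,
    Module.finrank_fintype_fun_eq_card]

theorem exists_eq_smul_vecMulVec_of_forall_row_eq_smul {A : Matrix n n K} (hA : Aᵀ = A)
    {v : n → K} (hv : v ≠ 0) (hrows : ∀ i, ∃ c : K, c • v = A i) :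
    ∃ lam : K, A = lam • vecMulVec v v := by
  choose c hc using hrows
  obtain ⟨j₀, hj₀⟩ : ∃ j₀, v j₀ ≠ 0 := Function.ne_iff.mp hv
  have hentry : ∀ i j, A i j = c i * v j := fun i j => by
    rw [← hc i, Pi.smul_apply, smul_eq_mul]
  have hc_eq : ∀ i, c i = c j₀ / v j₀ * v i := fun i => by
    have hsymm : A i j₀ = A j₀ i := congrFun (congrFun hA j₀) i
    rw [hentry, hentry] at hsymm
    field_simp
    linear_combination hsymm
  refine ⟨c j₀ / v j₀, ?_⟩
  ext i j
  rw [hentry, hc_eq, smul_apply, vecMulVec_apply, smul_eq_mul]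
  ring

end Matrix

/-- A symmetric `(p+1)×(p+1)` dissipation operator annihilating all monomial
sample vectors of degree at most `p-1` at `p+1` distinct nodes has rank at most
one, and admits a rank-one representation `A = λ • v vᵀ` with `v` orthogonal to
all monomial sample vectors of degree at most `p-1`. -/
theorem se_dissipation_rank_one
    (p : ℕ) (hp : 1 ≤ p) (x : Fin (p + 1) → ℝ) (hx : Function.Injective x)
    (A : Matrix (Fin (p + 1)) (Fin (p + 1)) ℝ)
    (hAsymm : Aᵀ = A)
    (hA : ∀ k : ℕ, k ≤ p - 1 → A *ᵥ (fun j => (x j) ^ k) = 0) :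
    A.rank ≤ 1 ∧
    ∃ (lam : ℝ) (v : Fin (p + 1) → ℝ),
      A = lam • vecMulVec v v ∧
      ∀ k : ℕ, k ≤ p - 1 → v ⬝ᵥ (fun j => (x j) ^ k) = 0 := by
  have hdeg : ∀ k : ℕ, k ≤ p - 1 ↔ k < p := fun k => Nat.le_sub_one_iff_lt hp
  set M : Matrix (Fin p) (Fin (p + 1)) ℝ := (vandermonde x)ᵀ.submatrix Fin.castSucc id
  have hM_apply : ∀ y k, (M *ᵥ y) k = y ⬝ᵥ (fun j => x j ^ (k : ℕ)) := fun y k => by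
    simp [M, mulVec, dotProduct, mul_comm]
  have hline : Module.finrank ℝ (LinearMap.ker M.mulVecLin) = 1 := by
    have := finrank_ker_mulVecLin_add_card (M := M)
      ((linearIndependent_rows_vandermonde_transpose hx).comp _ (Fin.castSucc_injective p))
    simp only [Fintype.card_fin] at this
    omega
  obtain ⟨⟨v, hvM⟩, hv0, hv⟩ := finrank_eq_one_iff'.mp hline
  have hrows : ∀ i, ∃ c : ℝ, c • v = A i := fun i => by
    have hAi : A i ∈ LinearMap.ker M.mulVecLin := funext fun k => by
      rw [mulVecLin_apply, hM_apply]
      exact congrFun (hA k ((hdeg k).mpr k.isLt)) i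
    obtain ⟨c, hc⟩ := hv ⟨A i, hAi⟩
    exact ⟨c, congrArg Subtype.val hc⟩
  obtain ⟨lam, hlam⟩ :=
    exists_eq_smul_vecMulVec_of_forall_row_eq_smul hAsymm (by simpa using hv0) hrows
  refine ⟨by rw [hlam, ← smul_vecMulVec]; exact rank_vecMulVec_le _ _, lam, v, hlam,
    fun k hk => ?_⟩
  simpa [hM_apply] using congrFun (LinearMap.mem_ker.mp hvM) ⟨k, (hdeg k).mp hk⟩
end

section
/- Let S and A be symmetric positive semidefinite N×N real matrices. Then every real eigenvalue of the product S * A is nonnegative: if μ ∈ ℝ and v ∈ ℝᴺ with v ≠ 0 satisfy (S * A) *ᵥ v = μ • v, then μ ≥ 0. (Thus, although the symmetric part S*A + (S*A)ᵀ of the product of two positive semidefinite matrices may have negative eigenvalues, the product S*A itself has none.) -/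
/-!
If `S * A` has eigenvector `v` with eigenvalue `μ`, then testing the quadratic form of `S` at
`w = A v` gives `0 ≤ w* S w = w* (μ v) = μ · v* A v`. Either `v* A v > 0` and hence `μ ≥ 0`, or
`v* A v = 0`, which for positive semidefinite `A` forces `A v = 0`, so `μ v = S A v = 0` and `μ = 0`.
-/

open Matrix
open scoped ComplexOrder

variable {𝕜 n : Type*} [RCLike 𝕜] [Fintype n]

theorem Matrix.PosSemidef.star_mulVec_dotProduct_eq {A : Matrix n n 𝕜} (hA : A.PosSemidef)
    (v : n → 𝕜) : star (A *ᵥ v) ⬝ᵥ v = star v ⬝ᵥ (A *ᵥ v) := by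
  rw [star_mulVec, hA.isHermitian.eq, dotProduct_mulVec]

theorem Matrix.PosSemidef.nonneg_of_mul_mulVec_eq_smul {S A : Matrix n n 𝕜}
    (hS : ∀ w, 0 ≤ star w ⬝ᵥ (S *ᵥ w)) (hA : A.PosSemidef)
    {μ : 𝕜} {v : n → 𝕜} (hv : v ≠ 0) (heig : (S * A) *ᵥ v = μ • v) : 0 ≤ μ := by
  have hSAv : S *ᵥ (A *ᵥ v) = μ • v := by rw [mulVec_mulVec, heig]
  have hprod : 0 ≤ μ * (star v ⬝ᵥ (A *ᵥ v)) := by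
    simpa only [hSAv, dotProduct_smul, smul_eq_mul, hA.star_mulVec_dotProduct_eq]
      using hS (A *ᵥ v)
  rcases (hA.dotProduct_mulVec_nonneg v).eq_or_lt with hzero | hpos
  · have hAv : A *ᵥ v = 0 := (hA.dotProduct_mulVec_zero_iff v).mp hzero.symm
    have hμv : μ • v = 0 := by rw [← hSAv, hAv, mulVec_zero]
    exact ((smul_eq_zero.mp hμv).resolve_right hv).ge
  · exact le_of_mul_le_mul_right (by rwa [zero_mul]) hpos

theorem eigenvalue_of_psd_product_nonneg_general
    (N : ℕ)
    (S A : Matrix (Fin N) (Fin N) ℝ)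
    (hSpsd : ∀ v : Fin N → ℝ, 0 ≤ v ⬝ᵥ (S *ᵥ v))
    (hAsymm : Aᵀ = A) (hApsd : ∀ v : Fin N → ℝ, 0 ≤ v ⬝ᵥ (A *ᵥ v))
    (μ : ℝ) (v : Fin N → ℝ) (hv : v ≠ 0)
    (heig : (S * A) *ᵥ v = μ • v) :
    0 ≤ μ := by
  have hA : A.PosSemidef :=
    .of_dotProduct_mulVec_nonneg (isHermitian_iff_isSymm.mpr hAsymm) (by simpa using hApsd)
  exact hA.nonneg_of_mul_mulVec_eq_smul (by simpa using hSpsd) hv heig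

/-- Every real eigenvalue of the product of two symmetric positive semidefinite
matrices is nonnegative. -/
theorem eigenvalue_of_psd_product_nonneg
    (N : ℕ)
    (S A : Matrix (Fin N) (Fin N) ℝ)
    (hSsymm : Sᵀ = S) (hSpsd : ∀ v : Fin N → ℝ, 0 ≤ v ⬝ᵥ (S *ᵥ v))
    (hAsymm : Aᵀ = A) (hApsd : ∀ v : Fin N → ℝ, 0 ≤ v ⬝ᵥ (A *ᵥ v))
    (μ : ℝ) (v : Fin N → ℝ) (hv : v ≠ 0)
    (heig : (S * A) *ᵥ v = μ • v) :
    0 ≤ μ :=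
  eigenvalue_of_psd_product_nonneg_general N S A hSpsd hAsymm hApsd μ v hv heig
end

section
/- Polynomial annihilation implies design-order accuracy of a dissipation stencil: let s ≥ 1, let x : Fin N → ℝ be nodes, let c : Fin N → ℝ be stencil coefficients satisfying ∑_j c_j (x_j)^k = 0 for every natural number k < s, and let x₀ ∈ ℝ. Then for every function f : ℝ → ℝ that is s-times continuously differentiable with |iteratedDeriv s f t| ≤ M for all t ∈ ℝ, one has |∑_j c_j f(x_j)| ≤ (M / s!) · ∑_j |c_j| · |x_j − x₀|^s. In particular a Taylor expansion of a row of the dissipation operator annihilating polynomials of degree ≤ s−1 contains only derivative terms of order at least s. -/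
/-!
Subtract from each `f (x j)` the Taylor polynomial of `f` of degree `< s` about `x₀`. The
stencil kills every polynomial of degree `< s`, in particular that Taylor polynomial, so only the
Lagrange remainders `f⁽ˢ⁾(ξⱼ) (x j - x₀) ^ s / s!` survive, and each is bounded by
`M / s! * |x j - x₀| ^ s`.
-/

open Finset Polynomial

section Annihilation

variable {ι R : Type*} [Fintype ι] [CommRing R] {x c : ι → R} {s : ℕ}

theorem sum_mul_eval_eq_zero_of_natDegree_lt (hann : ∀ k < s, ∑ j, c j * x j ^ k = 0)
    {p : R[X]} (hp : p.natDegree < s) : ∑ j, c j * p.eval (x j) = 0 := by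
  simp_rw [eval_eq_sum_range' hp, mul_sum]
  rw [sum_comm]
  refine sum_eq_zero fun k hk => ?_
  simp_rw [mul_left_comm (c _), ← mul_sum, hann k (mem_range.mp hk), mul_zero]

theorem sum_mul_sub_pow_eq_zero (hann : ∀ k < s, ∑ j, c j * x j ^ k = 0) (x₀ : R)
    {k : ℕ} (hk : k < s) : ∑ j, c j * (x j - x₀) ^ k = 0 := by
  have hdeg : ((X - C x₀) ^ k).natDegree < s :=
    (natDegree_pow_le_of_le k (natDegree_X_sub_C_le x₀)).trans_lt (by rwa [mul_one])
  simpa using sum_mul_eval_eq_zero_of_natDegree_lt hann hdeg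

theorem sum_mul_sum_sub_pow_eq_zero (hann : ∀ k < s, ∑ j, c j * x j ^ k = 0) (x₀ : R)
    (a : ℕ → R) : ∑ j, c j * ∑ k ∈ range s, a k * (x j - x₀) ^ k = 0 := by
  simp_rw [mul_sum]
  rw [sum_comm]
  refine sum_eq_zero fun k hk => ?_
  simp_rw [mul_left_comm (c _), ← mul_sum, sum_mul_sub_pow_eq_zero hann x₀ (mem_range.mp hk),
    mul_zero]

end Annihilation

theorem abs_sub_taylor_sum_le {s : ℕ} {f : ℝ → ℝ} (hf : ContDiff ℝ s f) {M : ℝ}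
    (hbound : ∀ t, |iteratedDeriv s f t| ≤ M) (x₀ y : ℝ) :
    |f y - ∑ k ∈ range s, iteratedDeriv k f x₀ / k.factorial * (y - x₀) ^ k|
      ≤ M / s.factorial * |y - x₀| ^ s := by
  obtain _ | n := s
  · simpa using hbound y
  obtain rfl | hne := eq_or_ne x₀ y
  · simp [sum_range_succ']
  obtain ⟨t, -, hrem⟩ := taylor_mean_remainder_lagrange_iteratedDeriv hne hf.contDiffOn
  have hT : taylorWithinEval f n (Set.uIcc x₀ y) x₀ y
      = ∑ k ∈ range (n + 1), iteratedDeriv k f x₀ / k.factorial * (y - x₀) ^ k := by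
    rw [taylor_within_apply]
    refine sum_congr rfl fun k hk => ?_
    rw [iteratedDerivWithin_eq_iteratedDeriv (uniqueDiffOn_uIcc hne)
      (hf.contDiffAt.of_le (by exact_mod_cast (mem_range.mp hk).le)) Set.left_mem_uIcc, smul_eq_mul]
    ring
  rw [← hT, hrem, abs_div, abs_mul, abs_pow, Nat.abs_cast, div_mul_eq_mul_div]
  gcongr
  exact hbound t

theorem stencil_design_order_accuracy_general
    (N s : ℕ)
    (x c : Fin N → ℝ)
    (hann : ∀ k : ℕ, k < s → ∑ j, c j * (x j) ^ k = 0)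
    (x₀ : ℝ) (M : ℝ)
    (f : ℝ → ℝ) (hf : ContDiff ℝ s f)
    (hbound : ∀ t : ℝ, |iteratedDeriv s f t| ≤ M) :
    |∑ j, c j * f (x j)| ≤ (M / s.factorial) * ∑ j, |c j| * |x j - x₀| ^ s := by
  set T : ℝ → ℝ := fun y => ∑ k ∈ range s, iteratedDeriv k f x₀ / k.factorial * (y - x₀) ^ k
  have hT : ∑ j, c j * T (x j) = 0 :=
    sum_mul_sum_sub_pow_eq_zero hann x₀ fun k => iteratedDeriv k f x₀ / k.factorial
  calc |∑ j, c j * f (x j)| = |∑ j, c j * (f (x j) - T (x j))| := by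
        simp_rw [mul_sub, sum_sub_distrib, hT, sub_zero]
    _ ≤ ∑ j, |c j| * |f (x j) - T (x j)| := by
        simpa only [abs_mul] using abs_sum_le_sum_abs (fun j => c j * (f (x j) - T (x j))) univ
    _ ≤ ∑ j, |c j| * (M / s.factorial * |x j - x₀| ^ s) := by
        gcongr with j
        exact abs_sub_taylor_sum_le hf hbound x₀ (x j)
    _ = (M / s.factorial) * ∑ j, |c j| * |x j - x₀| ^ s := by
        rw [mul_sum]
        exact sum_congr rfl fun j _ => mul_left_comm _ _ _

/-- Polynomial annihilation implies design-order accuracy of a dissipation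
stencil: if the coefficients `c` annihilate all monomials of degree `< s` at
the nodes `x`, then for any `s`-times continuously differentiable `f` with
`s`-th derivative bounded by `M`, the stencil applied to `f` is bounded by
`(M / s!) · ∑ j, |c j| · |x j − x₀| ^ s`. -/
theorem stencil_design_order_accuracy
    (N s : ℕ) (hs : 1 ≤ s)
    (x c : Fin N → ℝ)
    (hann : ∀ k : ℕ, k < s → ∑ j, c j * (x j) ^ k = 0)
    (x₀ : ℝ) (M : ℝ)
    (f : ℝ → ℝ) (hf : ContDiff ℝ s f)
    (hbound : ∀ t : ℝ, |iteratedDeriv s f t| ≤ M) :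
    |∑ j, c j * f (x j)| ≤ (M / s.factorial) * ∑ j, |c j| * |x j - x₀| ^ s :=
  stencil_design_order_accuracy_general N s x c hann x₀ M f hf hbound
end

section
/- The continuous dissipation term is nonpositive when boundary contributions vanish: let s ≥ 1, let α ≤ β be real numbers, let u : ℝ → ℝ be 2s-times continuously differentiable with iteratedDeriv (i−1) u vanishing at both α and β for every i = 1,…,s, and let a : ℝ → ℝ be s-times continuously differentiable with a(t) ≥ 0 for all t. Then, with g := fun t => a t * iteratedDeriv s u t, (−1)^{s+1} ∫_{α}^{β} u(t) · iteratedDeriv s g (t) dt = − ∫_{α}^{β} a(t) · (iteratedDeriv s u (t))² dt ≤ 0; the right-hand side (Term B) is always dissipative, decreasing the time derivative of the energy norm. -/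
lemma contDiff_iteratedDeriv_aux (n : ℕ) : ∀ (m : ℕ) (f : ℝ → ℝ),
    ContDiff ℝ (m + n) f → ContDiff ℝ m (iteratedDeriv n f) := by
  induction n with
  | zero => intro m f hf; simpa using hf
  | succ n ih =>
    intro m f hf
    rw [iteratedDeriv_succ']
    apply ih m (deriv f)
    have h2 : ContDiff ℝ (((m + n) + 1 : ℕ)) f := by
      rw [show (((m + n) + 1 : ℕ) : WithTop ℕ∞) = (m : ℕ) + ((n + 1 : ℕ)) by push_cast; ring]
      exact hf
    rw [show (((m + n) + 1 : ℕ) : WithTop ℕ∞) = ((m + n : ℕ) : WithTop ℕ∞) + 1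
      by push_cast; ring] at h2
    exact (contDiff_succ_iff_deriv.mp h2).2.2

lemma ibp_iter (α β : ℝ) (s : ℕ) : ∀ u g : ℝ → ℝ, ContDiff ℝ s u → ContDiff ℝ s g →
    (∀ j < s, iteratedDeriv j u α = 0 ∧ iteratedDeriv j u β = 0) →
    ∫ t in α..β, u t * iteratedDeriv s g t
      = (-1 : ℝ) ^ s * ∫ t in α..β, iteratedDeriv s u t * g t := by
  induction s with
  | zero => intro u g _ _ _; simp [iteratedDeriv_zero]
  | succ s ih =>
    intro u g hu hg hbc
    have hcast : ((s + 1 : ℕ) : WithTop ℕ∞) = (s : ℕ) + 1 := by push_cast; ring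
    rw [hcast] at hu hg
    have hu' : ContDiff ℝ s (deriv u) := (contDiff_succ_iff_deriv.mp hu).2.2
    have hudiff : Differentiable ℝ u := (contDiff_succ_iff_deriv.mp hu).1
    have hgs : ContDiff ℝ 1 (iteratedDeriv s g) := by
      apply contDiff_iteratedDeriv_aux s 1 g
      rw [show ((1 : ℕ) : WithTop ℕ∞) + (s : ℕ) = (s : ℕ) + 1 by push_cast; ring]
      exact hg
    have hgsdiff : Differentiable ℝ (iteratedDeriv s g) :=
      hgs.differentiable (by norm_num)
    have hgs1cont : Continuous (deriv (iteratedDeriv s g)) := by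
      rw [← iteratedDeriv_succ]
      exact hg.continuous_iteratedDeriv (s + 1) (by exact_mod_cast le_rfl)
    have key : ∫ t in α..β, u t * iteratedDeriv (s + 1) g t
        = u β * iteratedDeriv s g β - u α * iteratedDeriv s g α
          - ∫ t in α..β, deriv u t * iteratedDeriv s g t := by
      rw [iteratedDeriv_succ]
      exact intervalIntegral.integral_mul_deriv_eq_deriv_mul
        (fun x _ => (hudiff x).hasDerivAt)
        (fun x _ => (hgsdiff x).hasDerivAt)
        ((hu'.continuous).intervalIntegrable α β)
        (hgs1cont.intervalIntegrable α β)
    have huα : u α = 0 := by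
      have := (hbc 0 (Nat.succ_pos s)).1; simpa [iteratedDeriv_zero] using this
    have huβ : u β = 0 := by
      have := (hbc 0 (Nat.succ_pos s)).2; simpa [iteratedDeriv_zero] using this
    have ih' : ∫ t in α..β, deriv u t * iteratedDeriv s g t
        = (-1 : ℝ) ^ s * ∫ t in α..β, iteratedDeriv s (deriv u) t * g t := by
      apply ih (deriv u) g hu' (hg.of_le (by exact_mod_cast Nat.le_succ s))
      intro j hj
      rw [← iteratedDeriv_succ']
      exact hbc (j + 1) (by omega)
    rw [key, huα, huβ, ih', ← iteratedDeriv_succ']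
    ring

/-- The continuous dissipation term is nonpositive when the boundary
contributions vanish: with `g := a · u⁽ˢ⁾`, `a ≥ 0`, and the derivatives
`u⁽ⁱ⁻¹⁾` vanishing at both endpoints for `i = 1,…,s`,
`(−1)^{s+1} ∫ u · g⁽ˢ⁾ = − ∫ a · (u⁽ˢ⁾)² ≤ 0` (Term B is dissipative). -/
theorem dissipation_term_nonpositive
    (s : ℕ) (hs : 1 ≤ s) (α β : ℝ) (hαβ : α ≤ β)
    (u a : ℝ → ℝ)
    (hu : ContDiff ℝ (2 * s) u) (ha : ContDiff ℝ s a)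
    (hbc : ∀ i : ℕ, 1 ≤ i → i ≤ s →
      iteratedDeriv (i - 1) u α = 0 ∧ iteratedDeriv (i - 1) u β = 0)
    (hapos : ∀ t : ℝ, 0 ≤ a t) :
    (-1 : ℝ) ^ (s + 1) *
        ∫ t in α..β, u t * iteratedDeriv s (fun τ => a τ * iteratedDeriv s u τ) t
      = -∫ t in α..β, a t * (iteratedDeriv s u t) ^ 2 ∧
    -∫ t in α..β, a t * (iteratedDeriv s u t) ^ 2 ≤ 0 := by
  have hus : ContDiff ℝ s (iteratedDeriv s u) := by
    apply contDiff_iteratedDeriv_aux s s u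
    rw [show ((s : ℕ) : WithTop ℕ∞) + (s : ℕ) = ((2 * s : ℕ) : WithTop ℕ∞) by push_cast; ring]
    exact hu
  have hg : ContDiff ℝ s (fun τ => a τ * iteratedDeriv s u τ) := ha.mul hus
  have hu_s : ContDiff ℝ s u := hu.of_le (by exact_mod_cast Nat.le_mul_of_pos_left s two_pos)
  have hbc' : ∀ j < s, iteratedDeriv j u α = 0 ∧ iteratedDeriv j u β = 0 := by
    intro j hj
    have := hbc (j + 1) (by omega) (by omega)
    simpa using this
  have main := ibp_iter α β s u (fun τ => a τ * iteratedDeriv s u τ) hu_s hg hbc'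
  have hint : ∫ t in α..β, iteratedDeriv s u t * (fun τ => a τ * iteratedDeriv s u τ) t
      = ∫ t in α..β, a t * (iteratedDeriv s u t) ^ 2 := by
    apply intervalIntegral.integral_congr
    intro t _; simp; ring
  have hsign : ((-1 : ℝ) ^ (s + 1)) * ((-1 : ℝ) ^ s) = -1 := by
    rw [← pow_add, show s + 1 + s = 2 * s + 1 by ring]
    exact Odd.neg_one_pow ⟨s, by ring⟩
  constructor
  · rw [main, hint, ← mul_assoc, hsign]; ring
  · exact neg_nonpos.mpr (intervalIntegral.integral_nonneg hαβ
      fun t _ => mul_nonneg (hapos t) (sq_nonneg _))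
end

section
/- SBP rewriting of the wide-stencil dissipation operator: let H be a symmetric invertible N×N real matrix, let D be any N×N real matrix, and set E := H * D + Dᵀ * H (so that D satisfies the SBP property Dᵀ * H = E − H * D). Then for every s ≥ 1, H⁻¹ * (D^s)ᵀ * H = (−1)^s • D^s + ∑_{i=1}^{s} (−1)^{s+i} • (H⁻¹ * (D^{i−1})ᵀ * E * D^{s−i}). Consequently the dissipation operator A_D = −ε Δx^{2s−1} H⁻¹ (D^s)ᵀ H A D^s equals ε(−1)^{s+1} Δx^{2s−1} D^s A D^s minus the sum ∑_{i=1}^{s} ε(−1)^{s+i} Δx^{2s−1} H⁻¹ (D^{i−1})ᵀ E D^{s−i} A D^s of surface contributions. -/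
open Matrix

lemma sbp_pow_aux
    (N : ℕ) (H D E : Matrix (Fin N) (Fin N) ℝ)
    (hH : IsUnit H)
    (hDH : Dᵀ * H = E - H * D) :
    ∀ s : ℕ, 1 ≤ s →
      H⁻¹ * (D ^ s)ᵀ * H
        = (-1 : ℝ) ^ s • D ^ s +
            ∑ i ∈ Finset.Icc 1 s,
              (-1 : ℝ) ^ (s + i) • (H⁻¹ * (D ^ (i - 1))ᵀ * E * D ^ (s - i)) := by
  have hHdet : IsUnit H.det := (Matrix.isUnit_iff_isUnit_det H).mp hH
  have hinv : H⁻¹ * H = 1 := Matrix.nonsing_inv_mul H hHdet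
  intro s hs
  induction s with
  | zero => omega
  | succ n ih =>
    rcases Nat.eq_zero_or_pos n with hn | hn
    · subst hn
      simp only [zero_add, pow_one, Finset.Icc_self, Finset.sum_singleton]
      rw [mul_assoc, hDH, mul_sub, ← mul_assoc, hinv, one_mul]
      simp [sub_eq_add_neg, add_comm]
    · have IH := ih hn
      have step : H⁻¹ * (D ^ (n+1))ᵀ * H
          = H⁻¹ * (D ^ n)ᵀ * E - (H⁻¹ * (D ^ n)ᵀ * H) * D := by
        rw [pow_succ', transpose_mul, ← mul_assoc, mul_assoc _ _ H, hDH]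
        rw [mul_sub]
        rw [mul_assoc (H⁻¹ * (D^n)ᵀ) H D, ← mul_assoc]
      rw [step, IH]
      rw [Finset.sum_Icc_succ_top (by omega : 1 ≤ n + 1)]
      have h1 : ((-1:ℝ)^(n+1+(n+1))) • (H⁻¹ * (D ^ (n+1-1))ᵀ * E * D ^ (n+1-(n+1)))
          = H⁻¹ * (D ^ n)ᵀ * E := by
        rw [Nat.add_sub_cancel, Nat.sub_self, pow_zero, mul_one]
        have hp : ((-1:ℝ))^(n+1+(n+1)) = 1 := by
          rw [show n+1+(n+1) = 2*(n+1) by omega, pow_mul]; norm_num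
        rw [hp, one_smul]
      rw [h1]
      rw [add_mul, Finset.sum_mul]
      have h2 : ∀ i ∈ Finset.Icc 1 n,
          ((-1:ℝ)^(n+1+i)) • (H⁻¹ * (D ^ (i-1))ᵀ * E * D ^ (n+1-i))
            = -(((-1:ℝ)^(n+i)) • (H⁻¹ * (D ^ (i-1))ᵀ * E * D ^ (n-i)) * D) := by
        intro i hi
        simp only [Finset.mem_Icc] at hi
        rw [smul_mul_assoc, ← neg_smul]
        congr 1
        · rw [show n+1+i = (n+i)+1 by omega, pow_succ]; ring
        · rw [mul_assoc (H⁻¹ * (D ^ (i-1))ᵀ * E) (D ^ (n-i)) D, ← pow_succ,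
            show n-i+1 = n+1-i by omega]
      rw [Finset.sum_congr rfl h2, Finset.sum_neg_distrib]
      rw [smul_mul_assoc, ← pow_succ]
      rw [pow_succ (-1:ℝ) n]
      have : ((-1:ℝ)^n * -1) • D ^ (n+1) = -(((-1:ℝ)^n) • D ^ (n+1)) := by
        rw [← neg_smul]; congr 1; ring
      rw [this]
      abel

/-- SBP rewriting of the wide-stencil dissipation operator: for an SBP operator
`D` with symmetric invertible norm `H` and boundary matrix `E = H*D + Dᵀ*H`,
one has `H⁻¹ (Dˢ)ᵀ H = (−1)ˢ Dˢ + ∑_{i=1}^{s} (−1)^{s+i} H⁻¹ (Dⁱ⁻¹)ᵀ E D^{s−i}`;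
consequently the dissipation operator
`A_D = −ε Δx^{2s−1} H⁻¹ (Dˢ)ᵀ H A Dˢ` equals
`ε (−1)^{s+1} Δx^{2s−1} Dˢ A Dˢ` minus the surface contributions. -/
theorem sbp_dissipation_rewriting
    (N : ℕ) (H D E : Matrix (Fin N) (Fin N) ℝ)
    (hHsymm : Hᵀ = H) (hH : IsUnit H)
    (hE : E = H * D + Dᵀ * H) :
    ∀ s : ℕ, 1 ≤ s →
      (H⁻¹ * (D ^ s)ᵀ * H
        = (-1 : ℝ) ^ s • D ^ s +
            ∑ i ∈ Finset.Icc 1 s,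
              (-1 : ℝ) ^ (s + i) • (H⁻¹ * (D ^ (i - 1))ᵀ * E * D ^ (s - i))) ∧
      ∀ (ε Δx : ℝ) (A : Matrix (Fin N) (Fin N) ℝ),
        (-(ε * Δx ^ (2 * s - 1))) • (H⁻¹ * (D ^ s)ᵀ * H * A * D ^ s)
          = (ε * (-1 : ℝ) ^ (s + 1) * Δx ^ (2 * s - 1)) • (D ^ s * A * D ^ s)
            - ∑ i ∈ Finset.Icc 1 s,
                (ε * (-1 : ℝ) ^ (s + i) * Δx ^ (2 * s - 1)) •
                  (H⁻¹ * (D ^ (i - 1))ᵀ * E * D ^ (s - i) * A * D ^ s) := by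
  have hDH : Dᵀ * H = E - H * D := by rw [hE]; abel
  intro s hs
  have key := sbp_pow_aux N H D E hH hDH s hs
  refine ⟨key, ?_⟩
  intro ε Δx A
  rw [key]
  simp only [add_mul, Finset.sum_mul, smul_mul_assoc, smul_add, Finset.smul_sum, smul_smul]
  rw [sub_eq_add_neg, ← Finset.sum_neg_distrib]
  congr 1
  · congr 1; ring
  · apply Finset.sum_congr rfl
    intro i hi
    rw [← neg_smul]
    congr 1
    ring
end
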